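/- General Simplicity Theorem: Let G and H be games such that (1) every left option G^L of G satisfies G^L ⧏ H and every right option G^R of G satisfies H ⧏ G^R; and (2) for every left option H^L of H there exists a left option G^L of G with H^L ≤ G^L, and for every right option H^R of H there exists a right option G^R of G with G^R ≤ H^R. Then G is equivalent to H. -/

import Mathlib

universe u

namespace SetTheory

/-- Pre-games, as in the former Mathlib `SetTheory.PGame` (removed from Mathlib). -/
inductive PGame : Type (u + 1)
  | mk : ∀ α β : Type u, (α → PGame) → (β → PGame) → PGame

namespace PGame

def LeftMoves : PGame → Type u
  | mk l _ _ _ => l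

def RightMoves : PGame → Type u
  | mk _ r _ _ => r

def moveLeft : ∀ g : PGame, LeftMoves g → PGame
  | mk _l _ L _ => L

def moveRight : ∀ g : PGame, RightMoves g → PGame
  | mk _ _r _ R => R

/-- Simultaneous recursive definition of `(x ≤ y, x ⧏ y)`, as in the former Mathlib. -/
noncomputable def leLF : PGame.{u} → PGame.{u} → Prop × Prop :=
  PGame.rec (motive := fun _ => PGame.{u} → Prop × Prop)
    (fun xl xr xL xR IHl IHr y =>
      PGame.rec (motive := fun _ => Prop × Prop)
        (fun yl yr yL yR JHl JHr =>
          ((∀ i, (IHl i (mk yl yr yL yR)).2) ∧ (∀ j, (JHr j).2),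
           (∃ i, (JHl i).1) ∨ (∃ j, (IHr j (mk yl yr yL yR)).1))) y)

instance : LE PGame := ⟨fun x y => (leLF x y).1⟩

/-- `x ⧏ y` ("less or fuzzy"). -/
def LF (x y : PGame) : Prop := (leLF x y).2

infix:50 " ⧏ " => PGame.LF

def Equiv (x y : PGame) : Prop := x ≤ y ∧ y ≤ x

instance : HasEquiv PGame := ⟨Equiv⟩

end PGame

end SetTheory

open SetTheory PGame

namespace SetTheory.PGame

theorem le_iff_forall_lf {x y : PGame} :
    x ≤ y ↔ (∀ i, x.moveLeft i ⧏ y) ∧ ∀ j, x ⧏ y.moveRight j := by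
  cases x; cases y; exact Iff.rfl

theorem lf_iff_exists_le {x y : PGame} :
    x ⧏ y ↔ (∃ i, x ≤ y.moveLeft i) ∨ ∃ j, x.moveRight j ≤ y := by
  cases x; cases y; exact Iff.rfl

theorem lf_of_le_moveLeft {x y : PGame} {i : y.LeftMoves} (h : x ≤ y.moveLeft i) : x ⧏ y :=
  lf_iff_exists_le.2 <| .inl ⟨i, h⟩

theorem lf_of_moveRight_le {x y : PGame} {j : x.RightMoves} (h : x.moveRight j ≤ y) : x ⧏ y :=
  lf_iff_exists_le.2 <| .inr ⟨j, h⟩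

end SetTheory.PGame

/-- General Simplicity Theorem: if every left option of `G` is `⧏ H`, every right
option of `G` satisfies `H ⧏`, every left option of `H` is dominated by some left
option of `G`, and every right option of `H` dominates some right option of `G`,
then `G ≈ H`. -/
theorem general_simplicity (G H : PGame)
    (h1L : ∀ i : G.LeftMoves, G.moveLeft i ⧏ H)
    (h1R : ∀ j : G.RightMoves, H ⧏ G.moveRight j)
    (h2L : ∀ i : H.LeftMoves, ∃ i' : G.LeftMoves, H.moveLeft i ≤ G.moveLeft i')
    (h2R : ∀ j : H.RightMoves, ∃ j' : G.RightMoves, G.moveRight j' ≤ H.moveRight j) :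
    G ≈ H := by
  constructor
  · refine le_iff_forall_lf.2 ⟨h1L, fun j => ?_⟩
    obtain ⟨j', hj'⟩ := h2R j
    exact lf_of_moveRight_le hj'
  · refine le_iff_forall_lf.2 ⟨fun i => ?_, h1R⟩
    obtain ⟨i', hi'⟩ := h2L i
    exact lf_of_le_moveLeft hi'
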